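/- arXiv:2501.09336 — 4 statements merged into one kernel-verified Lean document; each statement's English description precedes it below -/
import Mathlib

section
/- Let E be an n₁×n₂ random matrix with i.i.d. mean-zero Gaussian entries of variance σ². For deterministic A ∈ ℝ^{n₂×n₁}, B ∈ ℝ^{n₂×n₁}, C ∈ ℝ^{n₁×n₁}, one has E[E A E B Eᵀ C Eᵀ] = σ⁴ Aᵀ B Cᵀ + σ⁴ C B A + σ⁴ Trace(B) Trace(AC)·I_{n₁}. -/
/-!
Expanding the entry `(E A E B Eᵀ C Eᵀ) i j` gives a sum of the terms
`A a b * B c d * C e f * (E i a * E b c * E e d * E j f)`. For independent centred Gaussians of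
variance `v`, the expectation of a product of four of them is Isserlis' (Wick's) formula
`v² (δ_pq δ_rs + δ_pr δ_qs + δ_ps δ_qr)`: an index occurring only once splits off by
independence and has mean zero, two distinct pairs give `v * v`, and a fourfold index gives
the fourth moment `3 v²`, read off the moment generating function `exp (v t² / 2)`. Each of
the three pairings then contracts the index sum to one of the three terms of the formula.
-/

open Matrix MeasureTheory ProbabilityTheory Real
open scoped NNReal ENNReal

section GaussianMoments

lemma deriv_mul_exp_half_sq (a : ℝ) {P P' : ℝ → ℝ} (hP : ∀ t, HasDerivAt P (P' t) t) :
    deriv (fun t ↦ P t * rexp (a * t ^ 2 / 2))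
      = fun t ↦ (P' t + a * t * P t) * rexp (a * t ^ 2 / 2) := by
  ext t
  rw [((hP t).fun_mul (((hasDerivAt_pow 2 t).const_mul a).div_const 2).exp).deriv]
  ring

lemma iteratedDeriv_two_exp_half_sq (a : ℝ) :
    iteratedDeriv 2 (fun t ↦ rexp (a * t ^ 2 / 2))
      = fun t ↦ (a + a ^ 2 * t ^ 2) * rexp (a * t ^ 2 / 2) := by
  have h1 := deriv_mul_exp_half_sq a (fun t ↦ hasDerivAt_const t 1)
  have h2 := deriv_mul_exp_half_sq a (fun t ↦ (hasDerivAt_id' t).const_mul a)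
  simp only [one_mul, zero_add, mul_one] at h1 h2
  rw [iteratedDeriv_succ, iteratedDeriv_one, h1, h2]
  ext t
  ring

lemma iteratedDeriv_four_exp_half_sq_zero (a : ℝ) :
    iteratedDeriv 4 (fun t ↦ rexp (a * t ^ 2 / 2)) 0 = 3 * a ^ 2 := by
  have h3 : deriv (fun t ↦ (a + a ^ 2 * t ^ 2) * rexp (a * t ^ 2 / 2))
      = fun t ↦ (3 * a ^ 2 * t + a ^ 3 * t ^ 3) * rexp (a * t ^ 2 / 2) := by
    rw [deriv_mul_exp_half_sq a fun t ↦ ((hasDerivAt_pow 2 t).const_mul (a ^ 2)).const_add a]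
    ext t
    ring
  rw [iteratedDeriv_succ, iteratedDeriv_succ, iteratedDeriv_two_exp_half_sq, h3,
    deriv_mul_exp_half_sq a fun t ↦
      ((hasDerivAt_id' t).const_mul (3 * a ^ 2)).fun_add ((hasDerivAt_pow 3 t).const_mul (a ^ 3))]
  simp

variable {v : ℝ≥0}

lemma integral_pow_gaussianReal_eq_iteratedDeriv (k : ℕ) :
    ∫ x, x ^ k ∂gaussianReal 0 v = iteratedDeriv k (fun t ↦ rexp (v * t ^ 2 / 2)) 0 := by
  have h := iteratedDeriv_mgf_zero (X := fun x ↦ x) (μ := gaussianReal 0 v) (by simp) k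
  rw [mgf_fun_id_gaussianReal] at h
  simpa using h.symm

lemma integral_sq_gaussianReal : ∫ x, x ^ 2 ∂gaussianReal 0 v = v := by
  simp [integral_pow_gaussianReal_eq_iteratedDeriv, iteratedDeriv_two_exp_half_sq]

lemma integral_pow_four_gaussianReal : ∫ x, x ^ 4 ∂gaussianReal 0 v = 3 * v ^ 2 := by
  rw [integral_pow_gaussianReal_eq_iteratedDeriv, iteratedDeriv_four_exp_half_sq_zero]

end GaussianMoments

section FourthMoment

variable {Ω ι : Type*} [MeasurableSpace Ω] {μ : Measure Ω}

lemma integrable_mul_mul_mul_of_memLp {𝕜 : Type*} [NormedRing 𝕜] {Y₁ Y₂ Y₃ Y₄ : Ω → 𝕜}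
    (h₁ : MemLp Y₁ 4 μ) (h₂ : MemLp Y₂ 4 μ) (h₃ : MemLp Y₃ 4 μ) (h₄ : MemLp Y₄ 4 μ) :
    Integrable (fun ω ↦ Y₁ ω * Y₂ ω * Y₃ ω * Y₄ ω) μ := by
  have : ENNReal.HolderTriple 4 4 2 := ⟨by
    rw [← ENNReal.toReal_eq_toReal_iff' (by simp) (by simp),
      ENNReal.toReal_add (by simp) (by simp)]
    norm_num⟩
  have h₁₂ : MemLp (fun ω ↦ Y₁ ω * Y₂ ω) 2 μ := h₂.mul' h₁
  have h₃₄ : MemLp (fun ω ↦ Y₃ ω * Y₄ ω) 2 μ := h₄.mul' h₃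
  simpa only [mul_assoc] using memLp_one_iff_integrable.1 <| h₃₄.mul' h₁₂

lemma ProbabilityTheory.iIndepFun.indepFun_mul_mul_right₀ {β : Type*} [MeasurableSpace β]
    [Mul β] [MeasurableMul₂ β] {X : ι → Ω → β} (hX : iIndepFun X μ)
    (hm : ∀ i, AEMeasurable (X i) μ) {p q r s : ι} (hq : p ≠ q) (hr : p ≠ r) (hs : p ≠ s) :
    IndepFun (X p) (X q * X r * X s) μ := by
  classical
  have hφ : Measurable fun y : ({p} : Finset ι) → β ↦ y ⟨p, by simp⟩ := by fun_prop
  have hψ : Measurable fun y : ({q, r, s} : Finset ι) → β ↦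
      y ⟨q, by simp⟩ * y ⟨r, by simp⟩ * y ⟨s, by simp⟩ := by fun_prop
  exact (hX.indepFun_finset₀ {p} {q, r, s} (by simp [hq, hr, hs]) hm).comp hφ hψ

variable {v : ℝ≥0}

lemma aemeasurable_of_map_eq_gaussianReal {Y : Ω → ℝ} (hY : μ.map Y = gaussianReal 0 v) :
    AEMeasurable Y μ :=
  aemeasurable_of_map_neZero (by rw [hY]; infer_instance)

lemma memLp_of_map_eq_gaussianReal {Y : Ω → ℝ} (hY : μ.map Y = gaussianReal 0 v) (p : ℝ≥0) :
    MemLp Y p μ := by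
  have h := memLp_id_gaussianReal (μ := 0) (v := v) p
  rwa [← hY, memLp_map_measure_iff aestronglyMeasurable_id
    (aemeasurable_of_map_eq_gaussianReal hY)] at h

lemma integral_pow_of_map_eq_gaussianReal {Y : Ω → ℝ} (hY : μ.map Y = gaussianReal 0 v)
    (k : ℕ) : ∫ ω, Y ω ^ k ∂μ = ∫ x, x ^ k ∂gaussianReal 0 v := by
  rw [← hY, integral_map (aemeasurable_of_map_eq_gaussianReal hY) (by fun_prop)]

variable {X : ι → Ω → ℝ}

lemma integrable_mul_mul_mul_of_map_eq_gaussianReal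
    (hlaw : ∀ i, μ.map (X i) = gaussianReal 0 v) (p q r s : ι) :
    Integrable (fun ω ↦ X p ω * X q ω * X r ω * X s ω) μ :=
  integrable_mul_mul_mul_of_memLp (memLp_of_map_eq_gaussianReal (hlaw p) 4)
    (memLp_of_map_eq_gaussianReal (hlaw q) 4) (memLp_of_map_eq_gaussianReal (hlaw r) 4)
    (memLp_of_map_eq_gaussianReal (hlaw s) 4)

lemma integral_mul_mul_mul_eq_zero_of_ne (hX : iIndepFun X μ)
    (hlaw : ∀ i, μ.map (X i) = gaussianReal 0 v) {p q r s : ι}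
    (hq : p ≠ q) (hr : p ≠ r) (hs : p ≠ s) :
    ∫ ω, X p ω * X q ω * X r ω * X s ω ∂μ = 0 := by
  have hm i := aemeasurable_of_map_eq_gaussianReal (hlaw i)
  have hmean : ∫ ω, X p ω ∂μ = 0 := by
    simpa using integral_pow_of_map_eq_gaussianReal (hlaw p) 1
  have h := (hX.indepFun_mul_mul_right₀ hm hq hr hs).integral_fun_mul_eq_mul_integral
    (hm p).aestronglyMeasurable (((hm q).mul (hm r)).mul (hm s)).aestronglyMeasurable
  simpa only [Pi.mul_apply, ← mul_assoc, hmean, zero_mul] using h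

lemma integral_sq_mul_sq_of_ne (hX : iIndepFun X μ)
    (hlaw : ∀ i, μ.map (X i) = gaussianReal 0 v) {p r : ι} (h : p ≠ r) :
    ∫ ω, X p ω ^ 2 * X r ω ^ 2 ∂μ = v ^ 2 := by
  have hm i := aemeasurable_of_map_eq_gaussianReal (hlaw i)
  have hind := (hX.indepFun h).comp (φ := fun x : ℝ ↦ x ^ 2) (ψ := fun x : ℝ ↦ x ^ 2)
    (by fun_prop) (by fun_prop)
  have := hind.integral_fun_mul_eq_mul_integral ((hm p).pow_const 2).aestronglyMeasurable
    ((hm r).pow_const 2).aestronglyMeasurable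
  simp only [Function.comp_apply] at this
  rw [this, integral_pow_of_map_eq_gaussianReal (hlaw p),
    integral_pow_of_map_eq_gaussianReal (hlaw r), integral_sq_gaussianReal, sq]

variable [DecidableEq ι]

lemma integral_mul_self_mul_mul (hX : iIndepFun X μ)
    (hlaw : ∀ i, μ.map (X i) = gaussianReal 0 v) (p r s : ι) :
    ∫ ω, X p ω * X p ω * X r ω * X s ω ∂μ
      = v ^ 2 * ((if r = s then 1 else 0)
        + 2 * (if p = r then 1 else 0) * (if p = s then 1 else 0)) := by
  rcases eq_or_ne r s with rfl | hrs
  · rcases eq_or_ne p r with rfl | hpr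
    · have : ∀ ω, X p ω * X p ω * X p ω * X p ω = X p ω ^ 4 := fun ω ↦ by ring
      simp_rw [this, integral_pow_of_map_eq_gaussianReal (hlaw p), integral_pow_four_gaussianReal]
      simp only [if_true]
      ring
    · have : ∀ ω, X p ω * X p ω * X r ω * X r ω = X p ω ^ 2 * X r ω ^ 2 :=
        fun ω ↦ by ring
      simp_rw [this, integral_sq_mul_sq_of_ne hX hlaw hpr]
      simp [hpr]
  · rcases eq_or_ne p r with rfl | hpr
    · have : ∀ ω, X p ω * X p ω * X p ω * X s ω = X s ω * X p ω * X p ω * X p ω :=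
        fun ω ↦ by ring
      simp_rw [this, integral_mul_mul_mul_eq_zero_of_ne hX hlaw hrs.symm hrs.symm hrs.symm]
      simp [hrs]
    · have : ∀ ω, X p ω * X p ω * X r ω * X s ω = X r ω * X p ω * X p ω * X s ω :=
        fun ω ↦ by ring
      simp_rw [this, integral_mul_mul_mul_eq_zero_of_ne hX hlaw hpr.symm hpr.symm hrs]
      simp [hrs, hpr]

theorem integral_mul_mul_mul_eq_wick (hX : iIndepFun X μ)
    (hlaw : ∀ i, μ.map (X i) = gaussianReal 0 v) (p q r s : ι) :
    ∫ ω, X p ω * X q ω * X r ω * X s ω ∂μ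
      = v ^ 2 * ((if p = q then 1 else 0) * (if r = s then 1 else 0)
        + (if p = r then 1 else 0) * (if q = s then 1 else 0)
        + (if p = s then 1 else 0) * (if q = r then 1 else 0)) := by
  by_cases hpq : p = q
  · subst hpq
    rw [integral_mul_self_mul_mul hX hlaw]
    simp only [if_true, one_mul]
    ring
  by_cases hpr : p = r
  · subst hpr
    have : ∀ ω, X p ω * X q ω * X p ω * X s ω = X p ω * X p ω * X q ω * X s ω :=
      fun ω ↦ by ring
    simp_rw [this, integral_mul_self_mul_mul hX hlaw]
    simp [hpq, Ne.symm hpq]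
  by_cases hps : p = s
  · subst hps
    have : ∀ ω, X p ω * X q ω * X r ω * X p ω = X p ω * X p ω * X q ω * X r ω :=
      fun ω ↦ by ring
    simp_rw [this, integral_mul_self_mul_mul hX hlaw]
    simp [hpq, hpr]
  rw [integral_mul_mul_mul_eq_zero_of_ne hX hlaw hpq hpr hps]
  simp [hpq, hpr, hps]

end FourthMoment

section Contraction

variable {m n R : Type*} [Fintype m] [Fintype n] [CommSemiring R]

lemma mul_mul_mul_mul_transpose_mul_mul_transpose_apply
    (E : Matrix m n R) (A : Matrix n m R) (B : Matrix n n R) (C : Matrix m n R) (i j : m) :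
    (E * A * E * B * Eᵀ * C * Eᵀ) i j
      = ∑ f, ∑ e, ∑ d, ∑ c, ∑ b, ∑ a,
          A a b * B c d * C e f * (E i a * E b c * E e d * E j f) := by
  simp only [mul_apply, transpose_apply, Finset.sum_mul]
  ac_rfl

variable [DecidableEq m] [DecidableEq n] (A : Matrix n m R) (B : Matrix n n R) (C : Matrix m n R)
  (i j : m)

lemma sum_mul_ite_eq_transpose_mul_mul_transpose_apply :
    ∑ f, ∑ e, ∑ d, ∑ c, ∑ b, ∑ a, A a b * B c d * C e f *
      ((if (i, a) = (b, c) then 1 else 0) * (if (e, d) = (j, f) then 1 else 0))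
      = (Aᵀ * B * Cᵀ) i j := by
  simp [mul_apply, ite_and, Finset.sum_mul]

lemma sum_mul_ite_eq_mul_mul_apply :
    ∑ f, ∑ e, ∑ d, ∑ c, ∑ b, ∑ a, A a b * B c d * C e f *
      ((if (i, a) = (e, d) then 1 else 0) * (if (b, c) = (j, f) then 1 else 0))
      = (C * B * A) i j := by
  simp only [Prod.mk.injEq, ite_and, mul_ite, mul_one, mul_zero, Finset.sum_ite_irrel,
    Finset.sum_ite_eq, Finset.sum_ite_eq', Finset.mem_univ, if_true, Finset.sum_const_zero,
    mul_apply, Finset.sum_mul]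
  rw [Finset.sum_comm]
  exact Finset.sum_congr rfl fun _ _ ↦ Finset.sum_congr rfl fun _ _ ↦ by ring

lemma sum_mul_ite_eq_trace_mul_trace_mul_one_apply :
    ∑ f, ∑ e, ∑ d, ∑ c, ∑ b, ∑ a, A a b * B c d * C e f *
      ((if (i, a) = (j, f) then 1 else 0) * (if (b, c) = (e, d) then 1 else 0))
      = B.trace * (A * C).trace * (1 : Matrix m m R) i j := by
  simp only [Prod.mk.injEq, ite_and, mul_ite, mul_one, mul_zero, Finset.sum_ite_irrel,
    Finset.sum_ite_eq', Finset.mem_univ, if_true, Finset.sum_const_zero,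
    trace, diag_apply, mul_apply, Finset.mul_sum, Finset.sum_mul, one_apply]
  congr 1
  exact Finset.sum_congr rfl fun _ _ ↦ Finset.sum_congr rfl fun _ _ ↦
    Finset.sum_congr rfl fun _ _ ↦ by ring

lemma sum_mul_wick_pairings :
    ∑ f, ∑ e, ∑ d, ∑ c, ∑ b, ∑ a, A a b * B c d * C e f *
      ((if (i, a) = (b, c) then 1 else 0) * (if (e, d) = (j, f) then 1 else 0)
        + (if (i, a) = (e, d) then 1 else 0) * (if (b, c) = (j, f) then 1 else 0)
        + (if (i, a) = (j, f) then 1 else 0) * (if (b, c) = (e, d) then 1 else 0))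
      = (Aᵀ * B * Cᵀ) i j + (C * B * A) i j
        + B.trace * (A * C).trace * (1 : Matrix m m R) i j := by
  simp only [mul_add, Finset.sum_add_distrib, sum_mul_ite_eq_transpose_mul_mul_transpose_apply,
    sum_mul_ite_eq_mul_mul_apply, sum_mul_ite_eq_trace_mul_trace_mul_one_apply]

end Contraction

theorem gaussian_expectation_fourth_2_general
    {Ω : Type*} [MeasurableSpace Ω] (μ : Measure Ω)
    {n : ℕ} (σ : ℝ)
    (E : Ω → Matrix (Fin n) (Fin n) ℝ)
    (hindep : iIndepFun
      (fun p : Fin n × Fin n => fun ω => E ω p.1 p.2) μ)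
    (hgauss : ∀ i j, Measure.map (fun ω => E ω i j) μ
      = gaussianReal 0 (Real.toNNReal (σ ^ 2)))
    (A B C : Matrix (Fin n) (Fin n) ℝ) :
    ∀ i j, ∫ ω, (E ω * A * E ω * B * (E ω)ᵀ * C * (E ω)ᵀ) i j ∂μ
      = σ ^ 4 * (Aᵀ * B * Cᵀ) i j
        + σ ^ 4 * (C * B * A) i j
        + σ ^ 4 * B.trace * (A * C).trace * (1 : Matrix (Fin n) (Fin n) ℝ) i j := by
  intro i j
  have hlaw : ∀ p : Fin n × Fin n,
      μ.map (fun ω ↦ E ω p.1 p.2) = gaussianReal 0 (σ ^ 2).toNNReal :=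
    fun p ↦ hgauss p.1 p.2
  have hv : ((σ ^ 2).toNNReal : ℝ) ^ 2 = σ ^ 4 := by
    rw [Real.coe_toNNReal _ (sq_nonneg σ)]
    ring
  have hint : ∀ a b c d e f : Fin n,
      Integrable (fun ω ↦ E ω i a * E ω b c * E ω e d * E ω j f) μ :=
    fun a b c d e f ↦
      integrable_mul_mul_mul_of_map_eq_gaussianReal hlaw (i, a) (b, c) (e, d) (j, f)
  have hwick := fun a b c d e f : Fin n ↦
    integral_mul_mul_mul_eq_wick hindep hlaw (i, a) (b, c) (e, d) (j, f)
  simp_rw [mul_mul_mul_mul_transpose_mul_mul_transpose_apply]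
  -- `fun_prop` closes the integrability side conditions from `hint`
  simp (disch := (intros; fun_prop)) only [integral_finsetSum, integral_const_mul]
  simp only [hwick, hv]
  simp_rw [mul_left_comm _ (σ ^ 4), ← Finset.mul_sum, sum_mul_wick_pairings]
  ring

/-- if `E` is a random matrix with i.i.d. mean-zero Gaussian entries of
variance `σ²` (square, so that all the products are well-defined), then for deterministic
`A, B, C`, `𝔼[E A E B Eᵀ C Eᵀ] = σ⁴ Aᵀ B Cᵀ + σ⁴ C B A + σ⁴ Tr(B) Tr(AC) I`. -/
theorem gaussian_expectation_fourth_2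
    {Ω : Type*} [MeasurableSpace Ω] (μ : Measure Ω) [IsProbabilityMeasure μ]
    {n : ℕ} (σ : ℝ) (hσ : 0 < σ)
    (E : Ω → Matrix (Fin n) (Fin n) ℝ)
    (hmeas : ∀ i j, Measurable fun ω => E ω i j)
    (hindep : iIndepFun
      (fun p : Fin n × Fin n => fun ω => E ω p.1 p.2) μ)
    (hgauss : ∀ i j, Measure.map (fun ω => E ω i j) μ
      = gaussianReal 0 (Real.toNNReal (σ ^ 2)))
    (A B C : Matrix (Fin n) (Fin n) ℝ) :
    ∀ i j, ∫ ω, (E ω * A * E ω * B * (E ω)ᵀ * C * (E ω)ᵀ) i j ∂μ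
      = σ ^ 4 * (Aᵀ * B * Cᵀ) i j
        + σ ^ 4 * (C * B * A) i j
        + σ ^ 4 * B.trace * (A * C).trace * (1 : Matrix (Fin n) (Fin n) ℝ) i j :=
  gaussian_expectation_fourth_2_general μ σ E hindep hgauss A B C
end

section
/- Under the setup of the matrix P = I_n − U Uᵀ − (1/K)Σ_k U_k U_kᵀ with nonzero eigenvalues µ_1,…,µ_{n−r} ∈ [θ,1] summing to n − r − r_avg, the number of eigenvalues not exceeding 1/2 is at most 2·r_avg, and Σ_{i=1}^{n−r} µ_i^{-1} ≤ 2n + 2 r_avg/θ. -/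
open Matrix Finset

/-! Since `P U = 0`, an eigenvector `v` of `P` with nonzero eigenvalue is orthogonal to the
columns of `U`, so its eigenvalue is `1 - vᵀ M v ≥ 1 - ‖M‖ ≥ θ`, where `M = K⁻¹ ∑ₖ Uₖ Uₖᵀ`;
all eigenvalues are at most `1` because `1 - P = U Uᵀ + M` is positive semidefinite.
There are at most `n - r` nonzero eigenvalues (`rank P + rank U ≤ n`) and they sum to
`tr P = n - r - r_avg`, so their total deficit `∑ (1 - µᵢ)` is at most `r_avg`. Each `µᵢ ≤ 1/2`
contributes at least `1/2` to the deficit, which bounds their number by `2 r_avg` and the sum of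
their reciprocals by `2 r_avg / θ`; the remaining reciprocals are below `2`. -/

/-- The ℓ²→ℓ² operator norm (largest singular value) of a real matrix. -/
noncomputable def opNorm {m n : Type*} [Fintype m] [Fintype n] [DecidableEq n]
    (A : Matrix m n ℝ) : ℝ :=
  ‖LinearMap.toContinuousLinearMap (Matrix.toEuclideanLin A)‖

section Counting

variable {ι : Type*} {s : Finset ι} {f : ι → ℝ}

theorem card_filter_le_half_le_two_mul_card_sub_sum (hf : ∀ i ∈ s, f i ≤ 1) :
    (#(s.filter (f · ≤ 1 / 2)) : ℝ) ≤ 2 * (#s - ∑ i ∈ s, f i) := by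
  have hlow : ∑ i ∈ s.filter (f · ≤ 1 / 2), f i ≤ #(s.filter (f · ≤ 1 / 2)) * (1 / 2) := by
    simpa using sum_le_card_nsmul (s.filter (f · ≤ 1 / 2)) f _ fun i hi => (mem_filter.1 hi).2
  have hhigh : ∑ i ∈ s.filter (¬ f · ≤ 1 / 2), f i ≤ #(s.filter (¬ f · ≤ 1 / 2)) := by
    simpa using
      sum_le_card_nsmul (s.filter (¬ f · ≤ 1 / 2)) f _ fun i hi => hf i (mem_filter.1 hi).1
  have hcard : (#(s.filter (f · ≤ 1 / 2)) : ℝ) + #(s.filter (¬ f · ≤ 1 / 2)) = #s := by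
    exact_mod_cast card_filter_add_card_filter_not _
  rw [← sum_filter_add_sum_filter_not s (f · ≤ 1 / 2)]
  linarith

theorem sum_inv_le_two_mul_card_add (hf : ∀ i ∈ s, f i ≤ 1) {θ : ℝ} (hθ : 0 < θ)
    (hθf : ∀ i ∈ s, θ ≤ f i) :
    ∑ i ∈ s, (f i)⁻¹ ≤ 2 * #s + 2 * (#s - ∑ i ∈ s, f i) / θ := by
  have hlow : ∑ i ∈ s.filter (f · ≤ 1 / 2), (f i)⁻¹ ≤ #(s.filter (f · ≤ 1 / 2)) / θ := by
    simpa [div_eq_mul_inv] using sum_le_card_nsmul _ _ _ fun i hi =>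
      inv_anti₀ hθ (hθf i (mem_filter.1 hi).1)
  have hhigh : ∑ i ∈ s.filter (¬ f · ≤ 1 / 2), (f i)⁻¹ ≤ #(s.filter (¬ f · ≤ 1 / 2)) * 2 := by
    refine (sum_le_card_nsmul _ _ 2 fun i hi => ?_).trans_eq (nsmul_eq_mul _ _)
    have : 1 / 2 < f i := not_le.1 (mem_filter.1 hi).2
    rw [inv_le_comm₀ (by linarith) two_pos]
    linarith
  have hfilter : (#(s.filter (¬ f · ≤ 1 / 2)) : ℝ) ≤ #s := by exact_mod_cast card_filter_le _ _
  have hcount := div_le_div_of_nonneg_right (card_filter_le_half_le_two_mul_card_sub_sum hf) hθ.le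
  rw [← sum_filter_add_sum_filter_not s (f · ≤ 1 / 2)]
  linarith

end Counting

section Spectral

variable {m n : Type*} [Fintype n] [DecidableEq n]

theorem dotProduct_mulVec_le_opNorm (A : Matrix n n ℝ) {x : EuclideanSpace ℝ n} (hx : ‖x‖ = 1) :
    x ⬝ᵥ (A *ᵥ x) ≤ opNorm A :=
  calc x ⬝ᵥ (A *ᵥ x) = inner ℝ x (toEuclideanLin A x) := by
        simp [EuclideanSpace.inner_eq_star_dotProduct, dotProduct_comm]
    _ ≤ ‖x‖ * ‖toEuclideanLin A x‖ := real_inner_le_norm _ _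
    _ ≤ ‖x‖ * (opNorm A * ‖x‖) := by
        gcongr; exact (LinearMap.toContinuousLinearMap (toEuclideanLin A)).le_opNorm x
    _ = opNorm A := by rw [hx]; ring

omit [DecidableEq n] in
theorem trace_mul_transpose_eq_card [Fintype m] [DecidableEq m] {A : Matrix n m ℝ}
    (hA : Aᵀ * A = 1) :
    (A * Aᵀ).trace = Fintype.card m := by
  rw [trace_mul_comm, hA, trace_one]

namespace Matrix.IsHermitian

variable {A : Matrix n n ℝ} (hA : A.IsHermitian)

theorem eigenvalues_eq_dotProduct (i : n) :
    hA.eigenvalues i = hA.eigenvectorBasis i ⬝ᵥ (A *ᵥ hA.eigenvectorBasis i) := by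
  simpa using hA.eigenvalues_eq i

theorem eigenvectorBasis_dotProduct_self (i : n) :
    hA.eigenvectorBasis i ⬝ᵥ hA.eigenvectorBasis i = 1 := by
  have := real_inner_self_eq_norm_sq (hA.eigenvectorBasis i)
  rw [hA.eigenvectorBasis.orthonormal.1 i, EuclideanSpace.inner_eq_star_dotProduct] at this
  simpa [dotProduct_comm] using this

theorem eigenvalues_le_one (h : (1 - A).PosSemidef) (i : n) : hA.eigenvalues i ≤ 1 := by
  have := h.dotProduct_mulVec_nonneg (hA.eigenvectorBasis i)
  rw [star_trivial, sub_mulVec, one_mulVec, dotProduct_sub, eigenvectorBasis_dotProduct_self,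
    ← eigenvalues_eq_dotProduct] at this
  linarith

theorem transpose_mulVec_eigenvectorBasis_eq_zero {B : Matrix n m ℝ} (hAB : A * B = 0) {i : n}
    (hi : hA.eigenvalues i ≠ 0) : Bᵀ *ᵥ hA.eigenvectorBasis i = 0 := by
  have hBA : Bᵀ * A = 0 := by
    have hAt : Aᵀ = A := by simpa [conjTranspose_eq_transpose_of_trivial] using hA.eq
    rw [← hAt, ← transpose_mul, hAB, transpose_zero]
  have := congrArg (Bᵀ *ᵥ ·) (hA.mulVec_eigenvectorBasis i)
  simp only [mulVec_mulVec, hBA, zero_mulVec, mulVec_smul] at this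
  exact (smul_eq_zero.1 this.symm).resolve_left hi

theorem card_filter_eigenvalues_ne_zero_add_card_le [Fintype m] [DecidableEq m]
    {B : Matrix n m ℝ} (hAB : A * B = 0) (hB : Bᵀ * B = 1) :
    #(univ.filter (hA.eigenvalues · ≠ 0)) + Fintype.card m ≤ Fintype.card n := by
  have hBrank : B.rank = Fintype.card m := by
    rw [← rank_transpose_mul_self, hB, rank_one]
  have := rank_add_rank_le_card_of_mul_eq_zero hAB
  rwa [hBrank, hA.rank_eq_card_non_zero_eigs, Fintype.card_subtype] at this

theorem one_sub_opNorm_le_eigenvalues [Fintype m] {U : Matrix n m ℝ} {M : Matrix n n ℝ}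
    (hAUM : A = 1 - U * Uᵀ - M) (hAU : A * U = 0) {i : n} (hi : hA.eigenvalues i ≠ 0) :
    1 - opNorm M ≤ hA.eigenvalues i := by
  have hUv := hA.transpose_mulVec_eigenvectorBasis_eq_zero hAU hi
  have hM := dotProduct_mulVec_le_opNorm M (hA.eigenvectorBasis.orthonormal.1 i)
  subst hAUM
  rw [eigenvalues_eq_dotProduct, sub_mulVec, sub_mulVec, one_mulVec, ← mulVec_mulVec, hUv,
    mulVec_zero, sub_zero, dotProduct_sub, eigenvectorBasis_dotProduct_self]
  linarith

end Matrix.IsHermitian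

omit [DecidableEq n] in
theorem posSemidef_smul_sum_mul_transpose {ι : Type*} [Fintype ι] {r : ι → Type*}
    [∀ k, Fintype (r k)] (V : ∀ k, Matrix n (r k) ℝ) {c : ℝ} (hc : 0 ≤ c) :
    (c • ∑ k, V k * (V k)ᵀ).PosSemidef := by
  refine .smul (posSemidef_sum _ fun k _ => ?_) hc
  simpa using posSemidef_self_mul_conjTranspose (V k)

theorem one_sub_mul_transpose_sub_smul_sum_mul_eq_zero [Fintype m] [DecidableEq m]
    {ι : Type*} [Fintype ι] {r : ι → Type*} [∀ k, Fintype (r k)] {U : Matrix n m ℝ}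
    (hU : Uᵀ * U = 1) {V : ∀ k, Matrix n (r k) ℝ} (hUV : ∀ k, Uᵀ * V k = 0) (c : ℝ) :
    (1 - U * Uᵀ - c • ∑ k, V k * (V k)ᵀ) * U = 0 := by
  have hVU : ∀ k, (V k)ᵀ * U = 0 := fun k => by
    rw [← transpose_transpose U, ← transpose_mul, hUV, transpose_zero]
  rw [Matrix.sub_mul, Matrix.sub_mul, Matrix.one_mul, Matrix.mul_assoc, hU, Matrix.mul_one,
    Matrix.smul_mul, Matrix.sum_mul]
  simp [Matrix.mul_assoc, hVU]

end Spectral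

theorem P_eigenvalue_reciprocal_bounds_general {n r K : ℕ} (rk : Fin K → ℕ)
    (θ : ℝ) (hθ0 : 0 < θ)
    (U : Matrix (Fin n) (Fin r) ℝ) (hUo : Uᵀ * U = 1)
    (Uk : ∀ k : Fin K, Matrix (Fin n) (Fin (rk k)) ℝ)
    (hUko : ∀ k, (Uk k)ᵀ * Uk k = 1)
    (hperp : ∀ k, Uᵀ * Uk k = 0)
    (hmis : opNorm (((K : ℝ))⁻¹ • ∑ k, Uk k * (Uk k)ᵀ) ≤ 1 - θ)
    (P : Matrix (Fin n) (Fin n) ℝ)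
    (hP : P = 1 - U * Uᵀ - ((K : ℝ))⁻¹ • ∑ k, Uk k * (Uk k)ᵀ)
    (hHerm : P.IsHermitian) :
    ((Finset.univ.filter
        (fun i => hHerm.eigenvalues i ≠ 0 ∧ hHerm.eigenvalues i ≤ 1 / 2)).card : ℝ)
      ≤ 2 * (((K : ℝ))⁻¹ * ∑ k, (rk k : ℝ)) ∧
    ∑ i ∈ Finset.univ.filter (fun i => hHerm.eigenvalues i ≠ 0),
        (hHerm.eigenvalues i)⁻¹
      ≤ 2 * (n : ℝ) + 2 * (((K : ℝ))⁻¹ * ∑ k, (rk k : ℝ)) / θ := by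
  set a := (K : ℝ)⁻¹ * ∑ k, (rk k : ℝ)
  set S := univ.filter (hHerm.eigenvalues · ≠ 0)
  have hM := posSemidef_smul_sum_mul_transpose Uk (inv_nonneg.2 (Nat.cast_nonneg K))
  have hPU : P * U = 0 := hP ▸ one_sub_mul_transpose_sub_smul_sum_mul_eq_zero hUo hperp _
  have hPle : (1 - P).PosSemidef := by
    rw [hP, sub_sub, sub_sub_cancel]
    exact (posSemidef_self_mul_conjTranspose U).add hM
  have hle : ∀ i ∈ S, hHerm.eigenvalues i ≤ 1 := fun i _ => hHerm.eigenvalues_le_one hPle i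
  have hge : ∀ i ∈ S, θ ≤ hHerm.eigenvalues i := fun i hi => by
    linarith [hHerm.one_sub_opNorm_le_eigenvalues hP hPU (mem_filter.1 hi).2]
  have hcard : (#S : ℝ) + r ≤ n := by
    exact_mod_cast (Fintype.card_fin r ▸ Fintype.card_fin n ▸
      hHerm.card_filter_eigenvalues_ne_zero_add_card_le hPU hUo)
  have hsum : ∑ i ∈ S, hHerm.eigenvalues i = n - r - a := by
    have htrace := hHerm.trace_eq_sum_eigenvalues
    simp only [RCLike.ofReal_real_eq_id, id] at htrace
    rw [sum_filter_ne_zero, ← htrace, hP, trace_sub, trace_sub, trace_one,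
      trace_smul, trace_sum, trace_mul_transpose_eq_card hUo]
    simp [trace_mul_transpose_eq_card (hUko _), a]
  have hdeficit : (#S : ℝ) - ∑ i ∈ S, hHerm.eigenvalues i ≤ a := by linarith
  rw [← filter_filter]
  refine ⟨by linarith [card_filter_le_half_le_two_mul_card_sub_sum hle], ?_⟩
  calc ∑ i ∈ S, (hHerm.eigenvalues i)⁻¹
      ≤ 2 * #S + 2 * (#S - ∑ i ∈ S, hHerm.eigenvalues i) / θ :=
        sum_inv_le_two_mul_card_add hle hθ0 hge
    _ ≤ 2 * n + 2 * a / θ := add_le_add (by linarith [r.cast_nonneg (α := ℝ)]) (by gcongr)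

/-- for `P = Iₙ - U Uᵀ - (1/K) ∑ₖ Uₖ Uₖᵀ` under the JIVE setup (so that its
nonzero eigenvalues lie in `[θ, 1]` and sum to `n - r - r_avg`), the number of nonzero
eigenvalues not exceeding `1/2` is at most `2 r_avg`, and the sum of the reciprocals of the
nonzero eigenvalues is at most `2n + 2 r_avg / θ`. -/
theorem P_eigenvalue_reciprocal_bounds {n r K : ℕ} (hK : 1 ≤ K) (rk : Fin K → ℕ)
    (θ : ℝ) (hθ0 : 0 < θ) (hθ1 : θ ≤ 1)
    (U : Matrix (Fin n) (Fin r) ℝ) (hUo : Uᵀ * U = 1)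
    (Uk : ∀ k : Fin K, Matrix (Fin n) (Fin (rk k)) ℝ)
    (hUko : ∀ k, (Uk k)ᵀ * Uk k = 1)
    (hperp : ∀ k, Uᵀ * Uk k = 0)
    (hmis : opNorm (((K : ℝ))⁻¹ • ∑ k, Uk k * (Uk k)ᵀ) ≤ 1 - θ)
    (P : Matrix (Fin n) (Fin n) ℝ)
    (hP : P = 1 - U * Uᵀ - ((K : ℝ))⁻¹ • ∑ k, Uk k * (Uk k)ᵀ)
    (hHerm : P.IsHermitian) :
    ((Finset.univ.filter
        (fun i => hHerm.eigenvalues i ≠ 0 ∧ hHerm.eigenvalues i ≤ 1 / 2)).card : ℝ)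
      ≤ 2 * (((K : ℝ))⁻¹ * ∑ k, (rk k : ℝ)) ∧
    ∑ i ∈ Finset.univ.filter (fun i => hHerm.eigenvalues i ≠ 0),
        (hHerm.eigenvalues i)⁻¹
      ≤ 2 * (n : ℝ) + 2 * (((K : ℝ))⁻¹ * ∑ k, (rk k : ℝ)) / θ :=
  P_eigenvalue_reciprocal_bounds_general rk θ hθ0 U hUo Uk hUko hperp hmis P hP hHerm
end

section
/- Let P = Σ_{i=1}^{n−r} µ_i x_i x_iᵀ with orthonormal x_i and µ_i ≥ θ > 0, arising as P = I_n − U Uᵀ − (1/K)Σ_{j=1}^K U_j U_jᵀ for orthonormal U, U_j with UᵀU_j = 0. Then for each k and each i, x_iᵀ(I_n − U Uᵀ − U_k U_kᵀ)x_i ≤ min(K µ_i, 1). -/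
open Matrix

lemma dp_self_nonneg {n : ℕ} (v : Fin n → ℝ) : 0 ≤ v ⬝ᵥ v := by
  exact Finset.sum_nonneg fun i _ => mul_self_nonneg _

lemma qf_nonneg {n m : ℕ} (A : Matrix (Fin n) (Fin m) ℝ) (x : Fin n → ℝ) :
    0 ≤ x ⬝ᵥ (A * Aᵀ).mulVec x := by
  rw [← Matrix.mulVec_mulVec, Matrix.dotProduct_mulVec, ← Matrix.mulVec_transpose]
  exact dp_self_nonneg _

lemma qf_sum_le_one {n m r : ℕ} (U : Matrix (Fin n) (Fin r) ℝ)
    (V : Matrix (Fin n) (Fin m) ℝ)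
    (hU : Uᵀ * U = 1) (hV : Vᵀ * V = 1) (hUV : Uᵀ * V = 0)
    (x : Fin n → ℝ) (hx : x ⬝ᵥ x = 1) :
    x ⬝ᵥ (U * Uᵀ).mulVec x + x ⬝ᵥ (V * Vᵀ).mulVec x ≤ 1 := by
  have hVU : Vᵀ * U = 0 := by
    have := congrArg Matrix.transpose hUV
    simpa [Matrix.transpose_mul] using this
  set N : Matrix (Fin n) (Fin n) ℝ := U * Uᵀ + V * Vᵀ with hNdef
  have hNt : Nᵀ = N := by
    simp [hNdef, Matrix.transpose_add, Matrix.transpose_mul]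
  have hNN : N * N = N := by
    have expand : N * N = U * (Uᵀ * U) * Uᵀ + U * (Uᵀ * V) * Vᵀ
        + V * (Vᵀ * U) * Uᵀ + V * (Vᵀ * V) * Vᵀ := by
      simp only [hNdef, add_mul, mul_add, Matrix.mul_assoc]
      abel
    rw [expand, hU, hV, hUV, hVU]
    simp [hNdef]
  set s : ℝ := x ⬝ᵥ N.mulVec x with hsdef
  have hxw : x ⬝ᵥ N.mulVec x = s := rfl
  have hww : (N.mulVec x) ⬝ᵥ (N.mulVec x) = s := by
    rw [Matrix.dotProduct_mulVec, ← Matrix.mulVec_transpose, Matrix.mulVec_mulVec,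
      hNt, hNN, dotProduct_comm]
  have hwx : (N.mulVec x) ⬝ᵥ x = s := by
    rw [dotProduct_comm]
  have hpos : 0 ≤ (x - N.mulVec x) ⬝ᵥ (x - N.mulVec x) := dp_self_nonneg _
  have hexp : (x - N.mulVec x) ⬝ᵥ (x - N.mulVec x) = 1 - s := by
    rw [sub_dotProduct, dotProduct_sub, dotProduct_sub,
      hx, hxw, hwx, hww]
    ring
  have hs1 : s ≤ 1 := by rw [hexp] at hpos; linarith
  have hsplit : x ⬝ᵥ (U * Uᵀ).mulVec x + x ⬝ᵥ (V * Vᵀ).mulVec x = s := by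
    rw [hsdef, hNdef, Matrix.add_mulVec, dotProduct_add]
  linarith

lemma qf_dp_sum {n K : ℕ} (M : Fin K → Matrix (Fin n) (Fin n) ℝ) (x : Fin n → ℝ) :
    x ⬝ᵥ (∑ j, M j).mulVec x = ∑ j, x ⬝ᵥ (M j).mulVec x := by
  have h1 : (∑ j, M j).mulVec x = ∑ j, (M j).mulVec x :=
    map_sum (AddMonoidHom.mk' (fun A : Matrix (Fin n) (Fin n) ℝ => A.mulVec x)
      (fun A B => Matrix.add_mulVec A B x)) M Finset.univ
  rw [h1]
  exact map_sum (AddMonoidHom.mk' (fun v : Fin n → ℝ => x ⬝ᵥ v)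
    (fun a b => dotProduct_add x a b)) _ Finset.univ

/-- let `P = Iₙ - U Uᵀ - (1/K) ∑ⱼ Uⱼ Uⱼᵀ` for orthonormal `U, Uⱼ` with
`Uᵀ Uⱼ = 0`. If `x` is a unit eigenvector of `P` with eigenvalue `μ ≥ θ > 0`, then for
every `k` one has `xᵀ (Iₙ - U Uᵀ - Uₖ Uₖᵀ) x ≤ min (K μ) 1`. -/
theorem eigenvector_alignment_bound {n r K : ℕ} (hK : 1 ≤ K) (rk : Fin K → ℕ)
    (θ : ℝ) (hθ : 0 < θ)
    (U : Matrix (Fin n) (Fin r) ℝ) (hUo : Uᵀ * U = 1)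
    (Uk : ∀ k : Fin K, Matrix (Fin n) (Fin (rk k)) ℝ)
    (hUko : ∀ k, (Uk k)ᵀ * Uk k = 1)
    (hperp : ∀ k, Uᵀ * Uk k = 0)
    (P : Matrix (Fin n) (Fin n) ℝ)
    (hP : P = 1 - U * Uᵀ - ((K : ℝ))⁻¹ • ∑ j, Uk j * (Uk j)ᵀ)
    (x : Fin n → ℝ) (μ : ℝ) (hμ : θ ≤ μ)
    (hx : P.mulVec x = μ • x) (hxnorm : x ⬝ᵥ x = 1) :
    ∀ k, x ⬝ᵥ ((1 - U * Uᵀ - Uk k * (Uk k)ᵀ).mulVec x) ≤ min ((K : ℝ) * μ) 1 := by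
  intro k
  set a : ℝ := x ⬝ᵥ (U * Uᵀ).mulVec x with hadef
  set b : Fin K → ℝ := fun j => x ⬝ᵥ (Uk j * (Uk j)ᵀ).mulVec x with hbdef
  have ha0 : 0 ≤ a := qf_nonneg U x
  have hb0 : ∀ j, 0 ≤ b j := fun j => qf_nonneg (Uk j) x
  have hab : ∀ j, a + b j ≤ 1 := fun j =>
    qf_sum_le_one U (Uk j) hUo (hUko j) (hperp j) x hxnorm
  have hKne : ((K : ℝ)) ≠ 0 := by positivity
  -- value of the quadratic form of P
  have hμval : 1 - a - (K : ℝ)⁻¹ * (∑ j, b j) = μ := by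
    have h1 : x ⬝ᵥ P.mulVec x = μ := by
      rw [hx, dotProduct_smul, hxnorm]
      simp
    rw [hP, Matrix.sub_mulVec, Matrix.sub_mulVec, Matrix.smul_mulVec,
      dotProduct_sub, dotProduct_sub, dotProduct_smul,
      Matrix.one_mulVec, hxnorm, qf_dp_sum] at h1
    rw [← h1, smul_eq_mul]
  have hKμ : (K : ℝ) * μ = K - K * a - ∑ j, b j := by
    rw [← hμval, mul_sub, mul_sub, ← mul_assoc, mul_inv_cancel₀ hKne, one_mul, mul_one]
  have hsplit : ∑ j, b j = b k + ∑ j ∈ Finset.univ.erase k, b j :=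
    (Finset.add_sum_erase _ _ (Finset.mem_univ k)).symm
  have herase : ∑ j ∈ Finset.univ.erase k, b j ≤ (K : ℝ) - K * a - 1 + a := by
    have hcard : (Finset.univ.erase k).card = K - 1 := by
      simp [Finset.card_erase_of_mem]
    calc ∑ j ∈ Finset.univ.erase k, b j
        ≤ ∑ j ∈ Finset.univ.erase k, (1 - a) :=
          Finset.sum_le_sum (fun j _ => by linarith [hab j])
      _ = ((K - 1 : ℕ) : ℝ) * (1 - a) := by
          rw [Finset.sum_const, hcard, nsmul_eq_mul]
      _ = ((K : ℝ) - 1) * (1 - a) := by rw [Nat.cast_sub hK]; norm_num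
      _ = (K : ℝ) - K * a - 1 + a := by ring
  have hgoal : x ⬝ᵥ ((1 - U * Uᵀ - Uk k * (Uk k)ᵀ).mulVec x) = 1 - a - b k := by
    rw [Matrix.sub_mulVec, Matrix.sub_mulVec, dotProduct_sub,
      dotProduct_sub, Matrix.one_mulVec, hxnorm]
  rw [hgoal]
  refine le_min ?_ ?_
  · rw [hKμ, hsplit]; linarith
  · linarith [hb0 k]
end

section
/- There exist 3×3 rank-2 matrices A₁, A₂ with shared left singular direction e₁ such that e₁ is not an eigenvector of (A₁A₁ᵀ + A₂A₂ᵀ)/2. Concretely, for ε > 0, let A₁ = e₁e₁ᵀ + ε·(e₂−e₃)(e₁+e₂+e₃)ᵀ and A₂ = e₁e₁ᵀ + ε·(e₂+e₃)(e₁+e₂+e₃)ᵀ. Then (A₁A₁ᵀ + A₂A₂ᵀ)/2 equals the matrix [[1, ε, 0],[ε, 3ε², 0],[0,0,3ε²]], and e₁ = (1,0,0)ᵀ is not an eigenvector of this matrix. -/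
/-!
Each `Aᵢ` is a sum of two rank-one matrices whose upper-left `2 × 2` minor is `ε ≠ 0`, so it has
rank exactly 2. In `A₁A₁ᵀ + A₂A₂ᵀ` the cross terms along `e₃` cancel while those along `e₂` add
up, so the averaged Gram matrix has first column `(1, ε, 0)`, which is not a multiple of `e₁`.
-/

open Matrix

namespace Matrix
variable {m n R : Type*} [Fintype n]

theorem rank_add_le [Field R] (A B : Matrix m n R) : (A + B).rank ≤ A.rank + B.rank := by
  unfold rank
  rw [mulVecLin_add]
  exact (Submodule.finrank_mono (LinearMap.range_add_le _ _)).trans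
    (Submodule.finrank_add_le_finrank_add_finrank _ _)

theorem le_rank_of_isUnit_det_submatrix [CommRing R] [StrongRankCondition R] {k : ℕ}
    (A : Matrix m n R) (r : Fin k → m) (c : Fin k → n) (h : IsUnit (A.submatrix r c).det) :
    k ≤ A.rank := by
  simpa [rank_of_isUnit _ ((isUnit_iff_isUnit_det _).mpr h)] using rank_submatrix_le A r c

theorem rank_vecMulVec_add_vecMulVec_le [Field R] (a c : m → R) (b d : n → R) :
    (vecMulVec a b + vecMulVec c d).rank ≤ 2 :=
  (rank_add_le _ _).trans (add_le_add (rank_vecMulVec_le a b) (rank_vecMulVec_le c d))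

end Matrix

theorem rank_vecMulVec_e₁_add_vecMulVec_eq_two {K : Type*} [Field K] (u w : Fin 3 → K)
    (hu : u 0 = 0) (huw : u 1 * w 1 ≠ 0) :
    (vecMulVec ![1, 0, 0] ![1, 0, 0] + vecMulVec u w).rank = 2 := by
  refine le_antisymm (rank_vecMulVec_add_vecMulVec_le _ _ _ _)
    (le_rank_of_isUnit_det_submatrix _ ![0, 1] ![0, 1] ?_)
  rw [isUnit_iff_ne_zero, det_fin_two]
  simpa [vecMulVec_apply, hu] using huw

/-- the stacked-SVD counterexample. For `ε > 0`, with
`A₁ = e₁e₁ᵀ + ε (e₂ - e₃)(e₁ + e₂ + e₃)ᵀ` and `A₂ = e₁e₁ᵀ + ε (e₂ + e₃)(e₁ + e₂ + e₃)ᵀ`,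
the matrices `A₁, A₂` have rank 2, the averaged Gram matrix `(A₁A₁ᵀ + A₂A₂ᵀ)/2` equals
`[[1, ε, 0], [ε, 3ε², 0], [0, 0, 3ε²]]`, and `e₁` is not an eigenvector of it. -/
theorem stacked_svd_counterexample (ε : ℝ) (hε : 0 < ε)
    (e₁ e₂ e₃ : Fin 3 → ℝ)
    (he₁ : e₁ = ![1, 0, 0]) (he₂ : e₂ = ![0, 1, 0]) (he₃ : e₃ = ![0, 0, 1])
    (A₁ A₂ : Matrix (Fin 3) (Fin 3) ℝ)
    (hA₁ : A₁ = Matrix.vecMulVec e₁ e₁ + ε • Matrix.vecMulVec (e₂ - e₃) (e₁ + e₂ + e₃))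
    (hA₂ : A₂ = Matrix.vecMulVec e₁ e₁ + ε • Matrix.vecMulVec (e₂ + e₃) (e₁ + e₂ + e₃)) :
    A₁.rank = 2 ∧ A₂.rank = 2 ∧
    (1 / 2 : ℝ) • (A₁ * A₁ᵀ + A₂ * A₂ᵀ)
      = !![1, ε, 0; ε, 3 * ε ^ 2, 0; 0, 0, 3 * ε ^ 2] ∧
    ¬ ∃ lam : ℝ, ((1 / 2 : ℝ) • (A₁ * A₁ᵀ + A₂ * A₂ᵀ)).mulVec e₁ = lam • e₁ := by
  subst he₁ he₂ he₃
  have hrank (u : Fin 3 → ℝ) (hu₀ : u 0 = 0) (hu₁ : u 1 = 1) :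
      (vecMulVec ![1, 0, 0] ![1, 0, 0] + ε • vecMulVec u (![1, 0, 0] + ![0, 1, 0] + ![0, 0, 1])).rank
        = 2 := by
    rw [← smul_vecMulVec]
    exact rank_vecMulVec_e₁_add_vecMulVec_eq_two _ _ (by simp [hu₀]) (by simp [hu₁, hε.ne'])
  have hgram : (1 / 2 : ℝ) • (A₁ * A₁ᵀ + A₂ * A₂ᵀ)
      = !![1, ε, 0; ε, 3 * ε ^ 2, 0; 0, 0, 3 * ε ^ 2] := by
    subst hA₁ hA₂
    ext i j
    fin_cases i <;> fin_cases j <;> simp [mul_apply, Fin.sum_univ_three] <;> ring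
  refine ⟨hA₁ ▸ hrank _ (by simp) (by simp), hA₂ ▸ hrank _ (by simp) (by simp), hgram, ?_⟩
  rintro ⟨lam, h⟩
  rw [hgram] at h
  have hsecond := congrFun h 1
  simp [mulVec, dotProduct, Fin.sum_univ_three] at hsecond
  exact hε.ne' hsecond
end
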